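/- arXiv:2605.09857 — 2 statements merged into one kernel-verified Lean document; each statement's English description precedes it below -/
import Mathlib

section
/- (Iteration bound for weak-label multicalibration boost.) Let μ be a probability measure on a measurable space 𝒳, f★ : 𝒳 → [0,1] measurable, ε > 0, and let f₀, f₁, …, f_M : 𝒳 → [0,1] be measurable predictors such that for every t < M there exist τ_t ∈ {−1, +1} and measurable c_t : 𝒳 → [−1,1], w_t : [0,1] → [−1,1] with τ_t·∫ c_t(x)·w_t(f_t(x))·(f★(x) − f_t(x)) dμ(x) ≥ ε/2 and f_{t+1}(x) = min(1, max(0, f_t(x) + (ε/2)·τ_t·c_t(x)·w_t(f_t(x)))) for all x. Then M ≤ 4·(∫ (f₀(x) − f★(x))² dμ(x))/ε². -/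
/-!
The squared distance `Φ t = ∫ (f t - f★)²` is a potential. Expanding the square, one step of the
boost changes it by `-2η τ ∫ c·w(f t)·(f★ - f t) + η² ∫ (τ c w(f t))² ≤ -2η·ε/2 + η²`, with step size
`η = ε/2`, and projecting back onto `[0,1]` only brings each value closer to `f★ x ∈ [0,1]`.
So every step lowers `Φ` by at least `ε²/4`, and since `Φ ≥ 0` there are at most `4 Φ 0 / ε²` steps.
-/

open MeasureTheory

lemma sq_min_max_sub_le {lo hi a y : ℝ} (hy : y ∈ Set.Icc lo hi) :
    (min hi (max lo a) - y) ^ 2 ≤ (a - y) ^ 2 := by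
  obtain ⟨hlo, hhi⟩ := hy
  rcases le_total a lo with h | h
  · rw [max_eq_left h, min_eq_right (hlo.trans hhi)]
    nlinarith
  · rw [max_eq_right h]
    rcases le_total a hi with h' | h'
    · rw [min_eq_right h']
    · rw [min_eq_left h']
      nlinarith

lemma sq_clamp_step_le {a y u : ℝ} (η : ℝ) (hy : y ∈ Set.Icc (0 : ℝ) 1) (hu : |u| ≤ 1) :
    (min 1 (max 0 (a + η * u)) - y) ^ 2 ≤ (a - y) ^ 2 - 2 * η * (u * (y - a)) + η ^ 2 := by
  have hu2 : u ^ 2 ≤ 1 := (sq_le_one_iff_abs_le_one u).mpr hu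
  calc (min 1 (max 0 (a + η * u)) - y) ^ 2 ≤ (a + η * u - y) ^ 2 := sq_min_max_sub_le hy
    _ = (a - y) ^ 2 - 2 * η * (u * (y - a)) + η ^ 2 * u ^ 2 := by ring
    _ ≤ _ := by linarith [mul_le_of_le_one_right (sq_nonneg η) hu2]

theorem integral_sq_clamp_step_le {X : Type*} [MeasurableSpace X] (μ : Measure X)
    [IsProbabilityMeasure μ] {g y u : X → ℝ} (hg : Measurable g) (hy : Measurable y)
    (hu : Measurable u) (hg01 : ∀ x, g x ∈ Set.Icc (0 : ℝ) 1) (hy01 : ∀ x, y x ∈ Set.Icc (0 : ℝ) 1)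
    (hu1 : ∀ x, |u x| ≤ 1) (η : ℝ) :
    ∫ x, (min 1 (max 0 (g x + η * u x)) - y x) ^ 2 ∂μ
      ≤ ∫ x, (g x - y x) ^ 2 ∂μ - 2 * η * ∫ x, u x * (y x - g x) ∂μ + η ^ 2 := by
  have hdist : ∀ x, |g x - y x| ≤ 1 := fun x =>
    abs_sub_le_of_nonneg_of_le (hg01 x).1 (hg01 x).2 (hy01 x).1 (hy01 x).2
  have hsq : Integrable (fun x => (g x - y x) ^ 2) μ :=
    .of_bound (by fun_prop) 1 (ae_of_all _ fun x => by
      rw [Real.norm_eq_abs, abs_pow]; exact pow_le_one₀ (abs_nonneg _) (hdist x))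
  have hcross : Integrable (fun x => u x * (y x - g x)) μ :=
    .of_bound (by fun_prop) 1 (ae_of_all _ fun x => by
      rw [Real.norm_eq_abs, abs_mul, abs_sub_comm]
      exact mul_le_one₀ (hu1 x) (abs_nonneg _) (hdist x))
  have hlin : Integrable (fun x => (g x - y x) ^ 2 - 2 * η * (u x * (y x - g x))) μ :=
    hsq.sub (hcross.const_mul _)
  calc ∫ x, (min 1 (max 0 (g x + η * u x)) - y x) ^ 2 ∂μ
      ≤ ∫ x, ((g x - y x) ^ 2 - 2 * η * (u x * (y x - g x)) + η ^ 2) ∂μ :=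
        integral_mono_of_nonneg (ae_of_all _ fun x => sq_nonneg _)
          (hlin.add (integrable_const _))
          (ae_of_all _ fun x => sq_clamp_step_le η (hy01 x) (hu1 x))
    _ = _ := by
        rw [integral_add hlin (integrable_const _), integral_sub hsq (hcross.const_mul _),
          integral_const_mul]
        simp

lemma nat_mul_le_sub_of_forall_add_le {Φ : ℕ → ℝ} {δ : ℝ} {M : ℕ}
    (h : ∀ t < M, Φ (t + 1) + δ ≤ Φ t) : M * δ ≤ Φ 0 - Φ M := by
  rw [← Finset.sum_range_sub']
  calc (M : ℝ) * δ = ∑ _t ∈ Finset.range M, δ := by simp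
    _ ≤ _ := Finset.sum_le_sum fun t ht => by linarith [h t (Finset.mem_range.mp ht)]

/-- Iteration bound for weak-label multicalibration boost: if every step of the
boosting procedure updates along a witness violated by at least `ε/2`, then the
number of steps is at most `4·Ψ(f₀)/ε²`. -/
theorem wlmc_iteration_bound {X : Type*} [MeasurableSpace X]
    (μ : Measure X) [IsProbabilityMeasure μ]
    (fstar : X → ℝ) (hfs : Measurable fstar)
    (hfs01 : ∀ x, fstar x ∈ Set.Icc (0:ℝ) 1)
    (ε : ℝ) (hε : 0 < ε) (M : ℕ)
    (f : ℕ → X → ℝ)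
    (hfmeas : ∀ t ≤ M, Measurable (f t))
    (hf01 : ∀ t ≤ M, ∀ x, f t x ∈ Set.Icc (0:ℝ) 1)
    (hstep : ∀ t < M, ∃ (τ : ℝ) (c : X → ℝ) (w : ℝ → ℝ),
      (τ = -1 ∨ τ = 1) ∧ Measurable c ∧ (∀ x, c x ∈ Set.Icc (-1:ℝ) 1) ∧
      Measurable w ∧ (∀ v ∈ Set.Icc (0:ℝ) 1, w v ∈ Set.Icc (-1:ℝ) 1) ∧
      ε / 2 ≤ τ * ∫ x, c x * w (f t x) * (fstar x - f t x) ∂μ ∧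
      ∀ x, f (t + 1) x = min 1 (max 0 (f t x + ε / 2 * τ * (c x * w (f t x))))) :
    (M : ℝ) ≤ 4 * (∫ x, (f 0 x - fstar x) ^ 2 ∂μ) / ε ^ 2 := by
  set Φ : ℕ → ℝ := fun t => ∫ x, (f t x - fstar x) ^ 2 ∂μ
  have hdecrease : ∀ t < M, Φ (t + 1) + (ε / 2) ^ 2 ≤ Φ t := by
    intro t ht
    obtain ⟨τ, c, w, hτ, hc, hc1, hw, hw1, hgap, hupd⟩ := hstep t ht
    have hft := hfmeas t ht.le
    have hu1 : ∀ x, |τ * (c x * w (f t x))| ≤ 1 := fun x => by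
      rw [abs_mul, abs_mul, show |τ| = 1 by rcases hτ with rfl | rfl <;> norm_num, one_mul]
      exact mul_le_one₀ (abs_le.mpr (hc1 x)) (abs_nonneg _) (abs_le.mpr (hw1 _ (hf01 t ht.le x)))
    have hnext : f (t + 1) = fun x => min 1 (max 0 (f t x + ε / 2 * (τ * (c x * w (f t x))))) :=
      funext fun x => by rw [hupd, mul_assoc]
    have hcross : ∫ x, τ * (c x * w (f t x)) * (fstar x - f t x) ∂μ
        = τ * ∫ x, c x * w (f t x) * (fstar x - f t x) ∂μ := by
      simp only [mul_assoc, integral_const_mul]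
    have hΦ_le :=
      integral_sq_clamp_step_le μ hft hfs (by fun_prop) (hf01 t ht.le) hfs01 hu1 (ε / 2)
    rw [hcross] at hΦ_le
    simp only [Φ, hnext]
    nlinarith
  have hΦM : 0 ≤ Φ M := integral_nonneg fun x => sq_nonneg _
  have htotal := nat_mul_le_sub_of_forall_add_le hdecrease
  rw [le_div_iff₀ (by positivity)]
  nlinarith
end

section
/- (Finite-class uniform deviation of the Pconf multicalibration estimator.) Assume 0 < π₊ < 1, P₋ is absolutely continuous with respect to P₊, and let r := π₊ · (dP₊/dP_X) with P_X := π₊·P₊ + π₋·P₋; assume there is C_r > 0 with r(x) ≥ C_r for P₊-almost every x. Let 𝒞 be a nonempty finite set of measurable functions c : 𝒳 → [−1,1], 𝒲 a nonempty finite set of measurable functions w : [0,1] → [−1,1], f : 𝒳 → [0,1] measurable, n ≥ 1, δ ∈ (0,1). For s ∈ 𝒳^{n} define Ĥ_{c,w}(s) := (π₊/n)·Σ_{i=1}^{n} c(s_i)·w(f(s_i))·(1 − f(s_i)/r(s_i)). Then under the product measure P₊^{⊗ n}, with probability at least 1 − δ, max_{c ∈ 𝒞, w ∈ 𝒲} |Ĥ_{c,w}(s)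 − R_{c,w}(f)| ≤ π₊·(1 + 1/C_r)·√(2·log(2·|𝒞|·|𝒲|/δ)/n). -/
/-!
Put `g_{c,w}(x) = c(x) w(f(x)) (1 - f(x)/r(x))`. Dividing by `r = π₊ dP₊/dP_X` changes measure
from `P₊` to `P_X = π₊ P₊ + π₋ P₋` (this needs `P₋ ≪ P₊`), which gives
`π₊ 𝔼_{P₊} g_{c,w} = R_{c,w}(f)`; so `Ĥ_{c,w}` is `π₊` times an i.i.d. empirical mean of `g_{c,w}`. Since `r ≥ C_r`, the summands are
bounded by `1 + 1/C_r`, and Hoeffding's inequality bounds each deviation probability by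
`δ / (|𝒞| |𝒲|)` at the stated radius; a union bound over `𝒞 × 𝒲` concludes.
-/

open MeasureTheory ProbabilityTheory Real

lemma measureReal_abs_sum_sub_integral_ge_le {Ω : Type*} [MeasurableSpace Ω] {μ : Measure Ω}
    [IsProbabilityMeasure μ] {Y : Ω → ℝ} (hY : AEMeasurable Y μ) {B : ℝ}
    (hB : ∀ᵐ x ∂μ, |Y x| ≤ B) (n : ℕ) {ε : ℝ} (hε : 0 ≤ ε) :
    (Measure.pi fun _ : Fin n => μ).real {s | ε ≤ |∑ i, (Y (s i) - ∫ x, Y x ∂μ)|} ≤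
      2 * exp (-ε ^ 2 / (2 * n * B ^ 2)) := by
  set m := ∫ x, Y x ∂μ
  set ν := Measure.pi fun _ : Fin n => μ
  have hsubG : ∀ i : Fin n,
      HasSubgaussianMGF (fun s : Fin n → Ω => Y (s i) - m) ((‖B - -B‖₊ / 2) ^ 2) ν := by
    intro i
    have hY' : HasSubgaussianMGF (fun x => Y x - m) ((‖B - -B‖₊ / 2) ^ 2) μ :=
      hasSubgaussianMGF_of_mem_Icc hY (by filter_upwards [hB] with x hx using abs_le.mp hx)
    rw [← (measurePreserving_eval (fun _ : Fin n => μ) i).map_eq] at hY'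
    exact HasSubgaussianMGF.of_map (μ := ν) (X := fun x => Y x - m) (Y := Function.eval i)
      (measurable_pi_apply i).aemeasurable hY'
  have hsum := HasSubgaussianMGF.sum_of_iIndepFun
    (iIndepFun_pi (μ := fun _ : Fin n => μ) fun _ => hY.sub_const m)
    (s := Finset.univ) fun i _ => hsubG i
  have hpar : ((∑ _i : Fin n, (‖B - -B‖₊ / 2) ^ 2 : NNReal) : ℝ) = n * B ^ 2 := by
    simp [← two_mul]
  have hup := hsum.measure_ge_le hε
  have hdown := hsum.neg.measure_ge_le hε
  rw [hpar, ← mul_assoc] at hup hdown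
  calc ν.real {s | ε ≤ |∑ i, (Y (s i) - m)|}
      ≤ ν.real ({s | ε ≤ ∑ i, (Y (s i) - m)} ∪ {s | ε ≤ -∑ i, (Y (s i) - m)}) :=
        measureReal_mono fun s (hs : ε ≤ _) => le_abs.mp hs
    _ ≤ _ := (measureReal_union_le _ _).trans (by rw [two_mul]; exact add_le_add hup hdown)

section RnDeriv

variable {α : Type*} [MeasurableSpace α] {μ ν : Measure α} [SigmaFinite μ] [SigmaFinite ν]

lemma div_toReal_rnDeriv_ae_eq (hμν : μ ≪ ν) (f : α → ℝ) :
    (fun x => f x / (μ.rnDeriv ν x).toReal) =ᵐ[μ] fun x => (ν.rnDeriv μ x).toReal * f x := by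
  filter_upwards [Measure.inv_rnDeriv hμν] with x hx
  rw [← hx, Pi.inv_apply, ENNReal.toReal_inv, div_eq_inv_mul]

lemma integral_div_toReal_rnDeriv (hμν : μ ≪ ν) (hνμ : ν ≪ μ) (f : α → ℝ) :
    ∫ x, f x / (μ.rnDeriv ν x).toReal ∂μ = ∫ x, f x ∂ν := by
  rw [integral_congr_ae (div_toReal_rnDeriv_ae_eq hμν f), integral_toReal_rnDeriv_mul hνμ]

lemma integrable_div_toReal_rnDeriv (hμν : μ ≪ ν) (hνμ : ν ≪ μ) {f : α → ℝ}
    (hf : Integrable f ν) : Integrable (fun x => f x / (μ.rnDeriv ν x).toReal) μ :=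
  ((integrable_toReal_rnDeriv_mul_iff hνμ).mpr hf).congr (div_toReal_rnDeriv_ae_eq hμν f).symm

end RnDeriv

section BinaryMixture

variable {X : Type*} [MeasurableSpace X] {Pp Pm : Measure X} {pip : ℝ}

/-- The marginal `P_X = π₊ P₊ + π₋ P₋`. -/
noncomputable def binaryMixture (Pp Pm : Measure X) (pip : ℝ) : Measure X :=
  ENNReal.ofReal pip • Pp + ENNReal.ofReal (1 - pip) • Pm

instance [IsFiniteMeasure Pp] [IsFiniteMeasure Pm] : IsFiniteMeasure (binaryMixture Pp Pm pip) :=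
  ⟨by simp [binaryMixture, ENNReal.mul_lt_top]⟩

lemma absolutelyContinuous_binaryMixture (hpi : 0 < pip) : Pp ≪ binaryMixture Pp Pm pip :=
  (Measure.absolutelyContinuous_smul (ENNReal.ofReal_pos.mpr hpi).ne').trans
    (Measure.AbsolutelyContinuous.rfl.add_right _)

lemma binaryMixture_absolutelyContinuous (hac : Pm ≪ Pp) : binaryMixture Pp Pm pip ≪ Pp :=
  Measure.smul_absolutelyContinuous.add_left (hac.smul_left _)

lemma integrable_binaryMixture {f : X → ℝ} (hp : Integrable f Pp) (hm : Integrable f Pm) :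
    Integrable f (binaryMixture Pp Pm pip) :=
  (hp.smul_measure ENNReal.ofReal_ne_top).add_measure (hm.smul_measure ENNReal.ofReal_ne_top)

lemma integral_binaryMixture (hpi0 : 0 ≤ pip) (hpi1 : pip ≤ 1) {f : X → ℝ}
    (hp : Integrable f Pp) (hm : Integrable f Pm) :
    ∫ x, f x ∂binaryMixture Pp Pm pip =
      pip * ∫ x, f x ∂Pp + (1 - pip) * ∫ x, f x ∂Pm := by
  rw [binaryMixture, integral_add_measure (hp.smul_measure ENNReal.ofReal_ne_top)
    (hm.smul_measure ENNReal.ofReal_ne_top), integral_smul_measure, integral_smul_measure,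
    ENNReal.toReal_ofReal hpi0, ENNReal.toReal_ofReal (sub_nonneg.mpr hpi1), smul_eq_mul,
    smul_eq_mul]

/-- `r(x) = π₊ dP₊/dP_X (x)`. -/
noncomputable def pconfRatio (Pp Pm : Measure X) (pip : ℝ) (x : X) : ℝ :=
  pip * (Pp.rnDeriv (binaryMixture Pp Pm pip) x).toReal

/-- `Ĥ_{c,w}(s)`, with `φ` standing for `c · (w ∘ f)`. -/
noncomputable def pconfEstimate (Pp Pm : Measure X) (pip : ℝ) (φ f : X → ℝ) {n : ℕ}
    (s : Fin n → X) : ℝ :=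
  pip / n * ∑ i, φ (s i) * (1 - f (s i) / pconfRatio Pp Pm pip (s i))

/-- `R_{c,w}(f)`, with `φ` standing for `c · (w ∘ f)`. -/
noncomputable def witnessMoment (Pp Pm : Measure X) (pip : ℝ) (φ f : X → ℝ) : ℝ :=
  pip * ∫ x, φ x * (1 - f x) ∂Pp - (1 - pip) * ∫ x, φ x * f x ∂Pm

lemma measurable_pconfRatio : Measurable (pconfRatio Pp Pm pip) :=
  measurable_const.mul (Measure.measurable_rnDeriv _ _).ennreal_toReal

variable [IsFiniteMeasure Pp] [IsFiniteMeasure Pm]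

/-- Dividing by `r` changes measure from `P₊` to `P_X`, whose `P₋`-part is the negative-class
term of `R`. -/
lemma integral_mul_one_sub_div_pconfRatio (hpi0 : 0 < pip) (hpi1 : pip ≤ 1)
    (hac : Pm ≪ Pp) {φ f : X → ℝ} (hφ : Integrable φ Pp)
    (hp : Integrable (fun x => φ x * f x) Pp) (hm : Integrable (fun x => φ x * f x) Pm) :
    pip * ∫ x, φ x * (1 - f x / pconfRatio Pp Pm pip x) ∂Pp =
      witnessMoment Pp Pm pip φ f := by
  have hPp := absolutelyContinuous_binaryMixture (Pp := Pp) (Pm := Pm) hpi0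
  have hPX := binaryMixture_absolutelyContinuous (pip := pip) hac
  have hweighted := integrable_div_toReal_rnDeriv hPp hPX (integrable_binaryMixture hp hm)
  have hsplit : ∀ x, φ x * (1 - f x / pconfRatio Pp Pm pip x) =
      φ x - pip⁻¹ * (φ x * f x / (Pp.rnDeriv (binaryMixture Pp Pm pip) x).toReal) := by
    intro x; rw [pconfRatio]; field_simp
  rw [witnessMoment]
  simp_rw [hsplit, mul_one_sub]
  rw [integral_sub hφ (hweighted.const_mul _), integral_const_mul,
    integral_div_toReal_rnDeriv hPp hPX, integral_binaryMixture hpi0.le hpi1 hp hm,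
    integral_sub hφ hp]
  field_simp
  ring

lemma pconfEstimate_sub_witnessMoment (hpi0 : 0 < pip) (hpi1 : pip ≤ 1) (hac : Pm ≪ Pp)
    {φ f : X → ℝ} (hφ : Integrable φ Pp) (hp : Integrable (fun x => φ x * f x) Pp)
    (hm : Integrable (fun x => φ x * f x) Pm) {n : ℕ} (hn : 0 < n) (s : Fin n → X) :
    pconfEstimate Pp Pm pip φ f s - witnessMoment Pp Pm pip φ f =
      pip / n * ∑ i, (φ (s i) * (1 - f (s i) / pconfRatio Pp Pm pip (s i)) -
        ∫ x, φ x * (1 - f x / pconfRatio Pp Pm pip x) ∂Pp) := by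
  rw [← integral_mul_one_sub_div_pconfRatio hpi0 hpi1 hac hφ hp hm, pconfEstimate,
    Finset.sum_sub_distrib, Finset.sum_const, Finset.card_univ, Fintype.card_fin, nsmul_eq_mul]
  have hn' : (n : ℝ) ≠ 0 := Nat.cast_ne_zero.mpr hn.ne'
  field_simp

end BinaryMixture

lemma abs_mul_one_sub_div_le {a b r C : ℝ} (ha : |a| ≤ 1) (hb : b ∈ Set.Icc 0 1) (hC : 0 < C)
    (hr : C ≤ r) : |a * (1 - b / r)| ≤ 1 + 1 / C := by
  have hdiv : b / r ≤ 1 / C := div_le_div₀ zero_le_one hb.2 hC hr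
  have hdiv0 : 0 ≤ b / r := div_nonneg hb.1 (hC.le.trans hr)
  rw [abs_mul]
  calc |a| * |1 - b / r| ≤ 1 * (1 + 1 / C) :=
        mul_le_mul ha (abs_le.mpr ⟨by linarith, by linarith⟩) (abs_nonneg _) zero_le_one
    _ = 1 + 1 / C := one_mul _

/-- At the radius `ε = B √(2 log (2N/δ) / n)` the two-sided Hoeffding tail equals `δ / N`. -/
lemma two_mul_exp_neg_eq_div_of_sqrt_log {B δ N : ℝ} {n : ℕ} (hB : B ≠ 0) (hn : 0 < n)
    (hδ : 0 < δ) (hN : δ ≤ 2 * N) :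
    2 * exp (-n * (B * sqrt (2 * log (2 * N / δ) / n)) ^ 2 / (2 * B ^ 2)) = δ / N := by
  have hQ : 1 ≤ 2 * N / δ := (one_le_div hδ).mpr hN
  rw [mul_pow, sq_sqrt (by have := log_nonneg hQ; positivity)]
  have hn' : (n : ℝ) ≠ 0 := Nat.cast_ne_zero.mpr hn.ne'
  rw [show -n * (B ^ 2 * (2 * log (2 * N / δ) / n)) / (2 * B ^ 2) = -log (2 * N / δ) by
    field_simp, exp_neg, exp_log (by linarith)]
  field_simp

lemma measure_biUnion_finset_le_ofReal {ι α : Type*} [MeasurableSpace α] {μ : Measure α}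
    (s : Finset ι) (A : ι → Set α) {δ : ℝ} (hδ : 0 ≤ δ)
    (h : ∀ i ∈ s, μ (A i) ≤ ENNReal.ofReal (δ / s.card)) :
    μ (⋃ i ∈ s, A i) ≤ ENNReal.ofReal δ := by
  calc μ (⋃ i ∈ s, A i) ≤ ∑ i ∈ s, μ (A i) := measure_biUnion_finset_le _ _
    _ ≤ s.card • ENNReal.ofReal (δ / s.card) := Finset.sum_le_card_nsmul _ _ _ h
    _ ≤ ENNReal.ofReal δ := by
      rw [nsmul_eq_mul, ← ENNReal.ofReal_natCast, ← ENNReal.ofReal_mul (by positivity)]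
      refine ENNReal.ofReal_le_ofReal ?_
      rcases eq_or_ne (s.card : ℝ) 0 with h | h
      · simp [h, hδ]
      · rw [mul_div_cancel₀ _ h]

lemma ofReal_one_sub_le_of_measure_compl_le {α : Type*} [MeasurableSpace α] {μ : Measure α}
    [IsProbabilityMeasure μ] {s : Set α} {δ : ℝ} (hδ : 0 ≤ δ)
    (h : μ sᶜ ≤ ENNReal.ofReal δ) :
    ENNReal.ofReal (1 - δ) ≤ μ s := by
  rw [ENNReal.ofReal_sub 1 hδ, ENNReal.ofReal_one, tsub_le_iff_right]
  calc 1 = μ Set.univ := measure_univ.symm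
    _ ≤ μ s + μ sᶜ := measure_univ_le_add_compl s
    _ ≤ μ s + ENNReal.ofReal δ := by gcongr

lemma measure_pconfEstimate_sub_witnessMoment_gt_le {X : Type*} [MeasurableSpace X]
    {Pp Pm : Measure X} [IsProbabilityMeasure Pp] [IsProbabilityMeasure Pm] {pip : ℝ}
    (hpi0 : 0 < pip) (hpi1 : pip ≤ 1) (hac : Pm ≪ Pp) {Cr : ℝ} (hCr : 0 < Cr)
    (hr : ∀ᵐ x ∂Pp, Cr ≤ pconfRatio Pp Pm pip x)
    {φ f : X → ℝ} (hφ : Measurable φ) (hφ1 : ∀ x, |φ x| ≤ 1) (hf : Measurable f)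
    (hf01 : ∀ x, f x ∈ Set.Icc (0 : ℝ) 1) {n : ℕ} (hn : 0 < n) {ε : ℝ} (hε : 0 ≤ ε) :
    (Measure.pi fun _ : Fin n => Pp)
      {s | pip * ε < |pconfEstimate Pp Pm pip φ f s - witnessMoment Pp Pm pip φ f|} ≤
      ENNReal.ofReal (2 * exp (-n * ε ^ 2 / (2 * (1 + 1 / Cr) ^ 2))) := by
  set g : X → ℝ := fun x => φ x * (1 - f x / pconfRatio Pp Pm pip x)
  have hg : Measurable g := hφ.mul (measurable_const.sub (hf.div measurable_pconfRatio))
  have hg_bdd : ∀ᵐ x ∂Pp, |g x| ≤ 1 + 1 / Cr := by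
    filter_upwards [hr] with x hx using abs_mul_one_sub_div_le (hφ1 x) (hf01 x) hCr hx
  have hφf_bdd : ∀ x, ‖φ x * f x‖ ≤ 1 := fun x => by
    rw [norm_mul, Real.norm_eq_abs, Real.norm_of_nonneg (hf01 x).1]
    exact mul_le_one₀ (hφ1 x) (hf01 x).1 (hf01 x).2
  have hn' : (0 : ℝ) < n := Nat.cast_pos.mpr hn
  have hsub : {s : Fin n → X |
        pip * ε < |pconfEstimate Pp Pm pip φ f s - witnessMoment Pp Pm pip φ f|} ⊆
      {s | n * ε ≤ |∑ i, (g (s i) - ∫ x, g x ∂Pp)|} := by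
    intro s hs
    rw [Set.mem_ofPred_eq, pconfEstimate_sub_witnessMoment hpi0 hpi1 hac
      (Integrable.of_bound hφ.aestronglyMeasurable 1 (ae_of_all _ hφ1))
      (Integrable.of_bound (hφ.mul hf).aestronglyMeasurable 1 (ae_of_all _ hφf_bdd))
      (Integrable.of_bound (hφ.mul hf).aestronglyMeasurable 1 (ae_of_all _ hφf_bdd)) hn,
      abs_mul, abs_of_pos (div_pos hpi0 hn')] at hs
    rw [Set.mem_ofPred_eq, ← mul_le_mul_iff_right₀ (div_pos hpi0 hn')]
    calc pip / n * (n * ε) = pip * ε := by field_simp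
      _ ≤ _ := hs.le
  refine (measure_mono hsub).trans ?_
  rw [← ofReal_measureReal]
  refine ENNReal.ofReal_le_ofReal ((measureReal_abs_sum_sub_integral_ge_le
    hg.aemeasurable hg_bdd n (by positivity)).trans_eq ?_)
  congr 2
  field_simp

theorem pconf_finite_class_uniform_deviation_general {X : Type*} [MeasurableSpace X]
    (Pp Pm : Measure X) [IsProbabilityMeasure Pp] [IsProbabilityMeasure Pm]
    (pip : ℝ) (hpi0 : 0 < pip) (hpi1 : pip < 1)
    (hac : Pm ≪ Pp)
    (Cr : ℝ) (hCr : 0 < Cr)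
    (hr : ∀ᵐ x ∂Pp, Cr ≤ pip * (Pp.rnDeriv
        (ENNReal.ofReal pip • Pp + ENNReal.ofReal (1 - pip) • Pm) x).toReal)
    (C : Finset (X → ℝ)) (W : Finset (ℝ → ℝ))
    (hC : ∀ c ∈ C, Measurable c ∧ ∀ x, c x ∈ Set.Icc (-1:ℝ) 1)
    (hW : ∀ w ∈ W, Measurable w ∧ ∀ v ∈ Set.Icc (0:ℝ) 1, w v ∈ Set.Icc (-1:ℝ) 1)
    (f : X → ℝ) (hf : Measurable f) (hf01 : ∀ x, f x ∈ Set.Icc (0:ℝ) 1)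
    (n : ℕ) (hn : 1 ≤ n)
    (δ : ℝ) (hδ : δ ∈ Set.Ioo (0:ℝ) 1) :
    ENNReal.ofReal (1 - δ) ≤
      (Measure.pi fun _ : Fin n => Pp)
      {s : Fin n → X |
        ∀ c ∈ C, ∀ w ∈ W,
          |(pip / n * ∑ i, c (s i) * w (f (s i)) *
              (1 - f (s i) / (pip * (Pp.rnDeriv
                (ENNReal.ofReal pip • Pp + ENNReal.ofReal (1 - pip) • Pm) (s i)).toReal)))
            - (pip * ∫ x, c x * w (f x) * (1 - f x) ∂Pp
              - (1 - pip) * ∫ x, c x * w (f x) * f x ∂Pm)|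
          ≤ pip * (1 + 1 / Cr) *
              Real.sqrt (2 * Real.log (2 * (C.card : ℝ) * (W.card : ℝ) / δ) / n) } := by
  rw [mul_assoc pip (1 + 1 / Cr), mul_assoc (2 : ℝ), ← Nat.cast_mul, ← Finset.card_product]
  set ε := (1 + 1 / Cr) * sqrt (2 * log (2 * (C ×ˢ W).card / δ) / n)
  refine ofReal_one_sub_le_of_measure_compl_le hδ.1.le ((measure_mono fun s hs => ?_).trans
    (measure_biUnion_finset_le_ofReal (C ×ˢ W) (fun p => {s | pip * ε <
      |pconfEstimate Pp Pm pip (fun x => p.1 x * p.2 (f x)) f s -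
        witnessMoment Pp Pm pip (fun x => p.1 x * p.2 (f x)) f|}) hδ.1.le fun p hp => ?_))
  · simpa [and_assoc, pconfEstimate, witnessMoment, pconfRatio, binaryMixture] using hs
  obtain ⟨hc, hw⟩ := Finset.mem_product.mp hp
  obtain ⟨hc_meas, hc_bdd⟩ := hC p.1 hc
  obtain ⟨hw_meas, hw_bdd⟩ := hW p.2 hw
  have hφ1 : ∀ x, |p.1 x * p.2 (f x)| ≤ 1 := fun x => by
    rw [abs_mul]
    exact mul_le_one₀ (abs_le.mpr (hc_bdd x)) (abs_nonneg _) (abs_le.mpr (hw_bdd _ (hf01 x)))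
  have hcard : δ ≤ 2 * (C ×ˢ W).card := by
    have : 0 < (C ×ˢ W).card := Finset.card_pos.mpr ⟨p, hp⟩
    have : (1 : ℝ) ≤ (C ×ˢ W).card := Nat.one_le_cast.mpr this
    linarith [hδ.2]
  exact (measure_pconfEstimate_sub_witnessMoment_gt_le hpi0 hpi1.le hac hCr hr
    (hc_meas.mul (hw_meas.comp hf)) hφ1 hf hf01 hn (by positivity)).trans_eq
    (congrArg ENNReal.ofReal (two_mul_exp_neg_eq_div_of_sqrt_log (by positivity) hn hδ.1 hcard))

/-- Finite-class uniform deviation of the empirical Pconf multicalibration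
estimator: with probability at least `1 − δ` over the positive-confidence
sample, the corrected empirical moments are uniformly close to the population
moments `R_{c,w}(f)`. Here `r := π₊ · dP₊/dP_X` and `r ≥ C_r` `P₊`-a.e. -/
theorem pconf_finite_class_uniform_deviation {X : Type*} [MeasurableSpace X]
    (Pp Pm : Measure X) [IsProbabilityMeasure Pp] [IsProbabilityMeasure Pm]
    (pip : ℝ) (hpi0 : 0 < pip) (hpi1 : pip < 1)
    (hac : Pm ≪ Pp)
    (Cr : ℝ) (hCr : 0 < Cr)
    (hr : ∀ᵐ x ∂Pp, Cr ≤ pip * (Pp.rnDeriv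
        (ENNReal.ofReal pip • Pp + ENNReal.ofReal (1 - pip) • Pm) x).toReal)
    (C : Finset (X → ℝ)) (W : Finset (ℝ → ℝ))
    (hCne : C.Nonempty) (hWne : W.Nonempty)
    (hC : ∀ c ∈ C, Measurable c ∧ ∀ x, c x ∈ Set.Icc (-1:ℝ) 1)
    (hW : ∀ w ∈ W, Measurable w ∧ ∀ v ∈ Set.Icc (0:ℝ) 1, w v ∈ Set.Icc (-1:ℝ) 1)
    (f : X → ℝ) (hf : Measurable f) (hf01 : ∀ x, f x ∈ Set.Icc (0:ℝ) 1)
    (n : ℕ) (hn : 1 ≤ n)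
    (δ : ℝ) (hδ : δ ∈ Set.Ioo (0:ℝ) 1) :
    ENNReal.ofReal (1 - δ) ≤
      (Measure.pi fun _ : Fin n => Pp)
      {s : Fin n → X |
        ∀ c ∈ C, ∀ w ∈ W,
          |(pip / n * ∑ i, c (s i) * w (f (s i)) *
              (1 - f (s i) / (pip * (Pp.rnDeriv
                (ENNReal.ofReal pip • Pp + ENNReal.ofReal (1 - pip) • Pm) (s i)).toReal)))
            - (pip * ∫ x, c x * w (f x) * (1 - f x) ∂Pp
              - (1 - pip) * ∫ x, c x * w (f x) * f x ∂Pm)|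
          ≤ pip * (1 + 1 / Cr) *
              Real.sqrt (2 * Real.log (2 * (C.card : ℝ) * (W.card : ℝ) / δ) / n) } :=
  pconf_finite_class_uniform_deviation_general Pp Pm pip hpi0 hpi1 hac Cr hCr hr C W hC hW f hf hf01
    n hn δ hδ
end
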